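/- arXiv:1503.06903 — 2 statements merged into one kernel-verified Lean document; each statement's English description precedes it below -/
import Mathlib

section
/- Assume the continuous functions q_i satisfy F_1(x_0, y_0) = y_0, F_N(x_N, y_N) = y_N, and F_i(x_N, y_N) = F_{i+1}(x_0, y_0) = ỹ_i with ỹ_i ∈ [y_i − ε, y_i + ε] for i = 1,…,N−1, where F_i(x, y) = α_i y + q_i(x) and ε > 0. Then the operator T : C_{y0,yN}(I) → C_{y0,yN}(I), (Tg)(x) = α_i g(L_i^{-1}(x)) + q_i(L_i^{-1}(x)) for x ∈ [x_{i-1}, x_i], is well-defined and a contraction with factor |α|_∞ = max_i |α_i| < 1 in the supremum norm, and its unique fixed point f is continuous on I and satisfies |f(x_i) − y_i| ≤ ε for all i = 0,1,…,N. -/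
open Set

noncomputable def aC (x : ℕ → ℝ) (N i : ℕ) : ℝ := (x (i + 1) - x i) / (x N - x 0)

noncomputable def bC (x : ℕ → ℝ) (N i : ℕ) : ℝ := (x N * x i - x 0 * x (i + 1)) / (x N - x 0)

/-- The inverse `L i ⁻¹ t = (t - b i) / a i` of the affine map `L i`. -/
noncomputable def LmInv (x : ℕ → ℝ) (N i : ℕ) (t : ℝ) : ℝ := (t - bC x N i) / aC x N i

/-!
On the piece `[x i, x (i+1)]`, `T g` is `α i * g + q i` precomposed with the increasing affine
bijection `L i⁻¹` onto `I`; so `T g` is continuous on every piece, hence on `I`, and the join-up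
conditions at `x 0` and `x N` pin its end values. The `q i` cancel in `T g - T h`, which makes `T`
a `max |α i|`-contraction for the sup norm, and Banach's fixed point theorem on the closed set of
functions in `C(I, ℝ)` with the prescribed end values gives the fixed point `f`. At an interior
knot, reading `f (x j) = T f (x j)` off the piece to the left of `x j` gives
`f (x j) = α (j-1) * y N + q (j-1) (x N) = ỹ j`.
-/

section Knots

variable {x : ℕ → ℝ} {N : ℕ}

theorem strictMonoOn_knots (hx : ∀ i < N, x i < x (i + 1)) : StrictMonoOn x (Iic N) :=
  strictMonoOn_Iic_of_lt_succ fun i hi => by simpa [Order.succ_eq_add_one] using hx i hi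

theorem knot_mem_Icc (hx : ∀ i < N, x i < x (i + 1)) {j : ℕ} (hj : j ≤ N) :
    x j ∈ Icc (x 0) (x N) :=
  ⟨(strictMonoOn_knots hx).monotoneOn (Nat.zero_le N) hj (Nat.zero_le j),
    (strictMonoOn_knots hx).monotoneOn hj (le_refl N) hj⟩

theorem knot_zero_lt (hx : ∀ i < N, x i < x (i + 1)) (hN : 0 < N) : x 0 < x N :=
  strictMonoOn_knots hx (Nat.zero_le N) (le_refl N) hN

theorem exists_mem_Icc_knots {k : ℕ} (hk : 0 < k) {t : ℝ} (ht : t ∈ Icc (x 0) (x k)) :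
    ∃ i < k, t ∈ Icc (x i) (x (i + 1)) := by
  induction k, hk using Nat.le_induction generalizing t with
  | base => exact ⟨0, zero_lt_one, ht⟩
  | succ k hk ih =>
    rcases le_or_gt t (x k) with htk | htk
    · obtain ⟨i, hi, hti⟩ := ih ⟨ht.1, htk⟩
      exact ⟨i, by omega, hti⟩
    · exact ⟨k, by omega, htk.le, ht.2⟩

theorem continuousOn_Icc_of_continuousOn_pieces {f : ℝ → ℝ} {k : ℕ} (hk : 0 < k)
    (hf : ∀ i < k, ContinuousOn f (Icc (x i) (x (i + 1)))) : ContinuousOn f (Icc (x 0) (x k)) := by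
  have hcover : Icc (x 0) (x k) ⊆ ⋃ i : Fin k, Icc (x i) (x (i + 1)) := fun t ht => by
    obtain ⟨i, hi, hti⟩ := exists_mem_Icc_knots hk ht
    exact mem_iUnion.2 ⟨⟨i, hi⟩, hti⟩
  exact ((locallyFinite_of_finite fun i : Fin k => Icc (x i) (x (i + 1))).continuousOn_iUnion
    (fun _ => isClosed_Icc) fun i => hf i i.2).mono hcover

end Knots

section AffineMaps

variable {x : ℕ → ℝ} {N i : ℕ}

theorem continuous_LmInv : Continuous (LmInv x N i) := by
  unfold LmInv
  fun_prop

theorem LmInv_knot (h0N : x 0 ≠ x N) (hi : x i ≠ x (i + 1)) : LmInv x N i (x i) = x 0 := by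
  have h₁ : x N - x 0 ≠ 0 := sub_ne_zero.2 h0N.symm
  have h₂ : x (i + 1) - x i ≠ 0 := sub_ne_zero.2 hi.symm
  unfold LmInv aC bC
  field_simp
  ring

theorem LmInv_knot_succ (h0N : x 0 ≠ x N) (hi : x i ≠ x (i + 1)) :
    LmInv x N i (x (i + 1)) = x N := by
  have h₁ : x N - x 0 ≠ 0 := sub_ne_zero.2 h0N.symm
  have h₂ : x (i + 1) - x i ≠ 0 := sub_ne_zero.2 hi.symm
  unfold LmInv aC bC
  field_simp
  ring

theorem monotone_LmInv (h0N : x 0 < x N) (hi : x i < x (i + 1)) : Monotone (LmInv x N i) := by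
  have ha : 0 < aC x N i := div_pos (sub_pos.2 hi) (sub_pos.2 h0N)
  intro s t hst
  unfold LmInv
  gcongr

theorem mapsTo_LmInv (h0N : x 0 < x N) (hi : x i < x (i + 1)) :
    MapsTo (LmInv x N i) (Icc (x i) (x (i + 1))) (Icc (x 0) (x N)) := by
  have := (monotone_LmInv h0N hi).mapsTo_Icc (a := x i) (b := x (i + 1))
  rwa [LmInv_knot h0N.ne hi.ne, LmInv_knot_succ h0N.ne hi.ne] at this

end AffineMaps

section Pinned

variable {a b ya yb : ℝ}

/-- The space `C_{ya,yb}([a, b])`, as functions `ℝ → ℝ` whose values off `[a, b]` are ignored. -/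
def pinnedContinuousOn (a b ya yb : ℝ) : Set (ℝ → ℝ) :=
  {g | ContinuousOn g (Icc a b) ∧ g a = ya ∧ g b = yb}

theorem pinnedContinuousOn_nonempty (hab : a < b) : (pinnedContinuousOn a b ya yb).Nonempty := by
  have hba : b - a ≠ 0 := sub_ne_zero.2 hab.ne'
  refine ⟨fun t => ya + (t - a) / (b - a) * (yb - ya), by fun_prop, by simp, ?_⟩
  simp [div_self hba]

theorem iSup_abs_sub_le_mul_iSup (hab : a ≤ b) {g h G H : ℝ → ℝ}
    (hg : ContinuousOn g (Icc a b)) (hh : ContinuousOn h (Icc a b)) {A : ℝ}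
    (hGH : ∀ M, (∀ u ∈ Icc a b, |g u - h u| ≤ M) → ∀ t ∈ Icc a b, |G t - H t| ≤ A * M) :
    (⨆ t : Icc a b, |G t - H t|) ≤ A * ⨆ t : Icc a b, |g t - h t| := by
  have : Nonempty (Icc a b) := ⟨⟨a, left_mem_Icc.2 hab⟩⟩
  have hbdd : BddAbove (range fun t : Icc a b => |g t - h t|) := by
    have := (isCompact_Icc.image_of_continuousOn (hg.sub hh).abs).bddAbove
    rwa [image_eq_range] at this
  exact ciSup_le fun t => hGH _ (fun u hu => le_ciSup hbdd ⟨u, hu⟩) t t.2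

theorem exists_fixedPoint_of_abs_sub_le (hab : a ≤ b) {T : (ℝ → ℝ) → ℝ → ℝ} {A : ℝ} (hA : A < 1)
    (hne : (pinnedContinuousOn a b ya yb).Nonempty)
    (hT : MapsTo T (pinnedContinuousOn a b ya yb) (pinnedContinuousOn a b ya yb))
    (hlip : ∀ g ∈ pinnedContinuousOn a b ya yb, ∀ h ∈ pinnedContinuousOn a b ya yb, ∀ M,
      (∀ u ∈ Icc a b, |g u - h u| ≤ M) → ∀ t ∈ Icc a b, |T g t - T h t| ≤ A * M) :
    ∃ f ∈ pinnedContinuousOn a b ya yb, EqOn (T f) f (Icc a b) ∧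
      ∀ g ∈ pinnedContinuousOn a b ya yb, EqOn (T g) g (Icc a b) → EqOn g f (Icc a b) := by
  set P := pinnedContinuousOn a b ya yb
  -- Via `projIcc`, `F ∈ S` is definitionally the end condition on `IccExtend hab F`.
  set S : Set C(Icc a b, ℝ) := {F | F (projIcc a b hab a) = ya ∧ F (projIcc a b hab b) = yb}
  have hS : IsClosed S :=
    (isClosed_eq (continuous_eval_const _) continuous_const).inter
      (isClosed_eq (continuous_eval_const _) continuous_const)
  have : CompleteSpace S := hS.completeSpace_coe
  have hextend (F : S) : IccExtend hab F.1 ∈ P := ⟨F.1.continuous.Icc_extend'.continuousOn, F.2⟩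
  have hrestrict {g : ℝ → ℝ} (hg : g ∈ P) :
      (⟨(Icc a b).domRestrict g, hg.1.domRestrict⟩ : C(Icc a b, ℝ)) ∈ S := by
    simpa [S] using ⟨hg.2.1, hg.2.2⟩
  have hcongr {g h : ℝ → ℝ} (hg : g ∈ P) (hh : h ∈ P) (hgh : EqOn g h (Icc a b)) :
      EqOn (T g) (T h) (Icc a b) := fun t ht =>
    sub_eq_zero.1 <| abs_nonpos_iff.1 <| by
      simpa using hlip g hg h hh 0 (fun u hu => by simp [hgh hu]) t ht
  let Φ : S → S := fun F => ⟨_, hrestrict (hT (hextend F))⟩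
  have hΦ : ContractingWith A.toNNReal Φ := by
    refine ⟨Real.toNNReal_lt_one.2 hA, LipschitzWith.of_dist_le_mul fun F G => ?_⟩
    rw [Subtype.dist_eq, ContinuousMap.dist_le (by positivity)]
    intro t
    refine (hlip _ (hextend F) _ (hextend G) (dist F G) (fun u hu => ?_) t t.2).trans ?_
    · rw [IccExtend_of_mem hab _ hu, IccExtend_of_mem hab _ hu, ← Real.dist_eq]
      exact ContinuousMap.dist_apply_le_dist _
    · exact mul_le_mul_of_nonneg_right (Real.le_coe_toNNReal A) dist_nonneg
  have : Nonempty S := ⟨⟨_, hrestrict hne.some_mem⟩⟩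
  set F := hΦ.fixedPoint Φ
  have hF : Φ F = F := hΦ.fixedPoint_isFixedPt
  refine ⟨IccExtend hab F.1, hextend F, fun t ht => ?_, fun g hg hgT t ht => ?_⟩
  · rw [IccExtend_of_mem hab _ ht]
    exact congr($hF.1 ⟨t, ht⟩)
  · set G : S := ⟨_, hrestrict hg⟩
    have hextendG : EqOn (IccExtend hab G.1) g (Icc a b) := fun u hu => IccExtend_of_mem hab _ hu
    have hG : Φ G = G := Subtype.ext <| ContinuousMap.ext fun u =>
      (hcongr (hextend G) hg hextendG u.2).trans (hgT u.2)
    have hGF : G = F := hΦ.fixedPoint_unique hG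
    rw [IccExtend_of_mem hab _ ht, ← hGF]
    rfl

end Pinned

section ReadBajraktarevic

variable {x y α : ℕ → ℝ} {N : ℕ} {q : ℕ → ℝ → ℝ} {T : (ℝ → ℝ) → ℝ → ℝ}

def IsReadBajraktarevicOp (x y : ℕ → ℝ) (N : ℕ) (α : ℕ → ℝ) (q : ℕ → ℝ → ℝ)
    (T : (ℝ → ℝ) → ℝ → ℝ) : Prop :=
  ∀ g : ℝ → ℝ, g (x 0) = y 0 → g (x N) = y N → ∀ i < N, ∀ t ∈ Icc (x i) (x (i + 1)),
    T g t = α i * g (LmInv x N i t) + q i (LmInv x N i t)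

namespace IsReadBajraktarevicOp

theorem apply_knot (hT : IsReadBajraktarevicOp x y N α q T) (hx : ∀ i < N, x i < x (i + 1))
    {g : ℝ → ℝ} (hg0 : g (x 0) = y 0) (hgN : g (x N) = y N) {i : ℕ} (hi : i < N) :
    T g (x i) = α i * y 0 + q i (x 0) := by
  rw [hT g hg0 hgN i hi _ (left_mem_Icc.2 (hx i hi).le),
    LmInv_knot (knot_zero_lt hx (by omega)).ne (hx i hi).ne, hg0]

theorem apply_knot_succ (hT : IsReadBajraktarevicOp x y N α q T) (hx : ∀ i < N, x i < x (i + 1))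
    {g : ℝ → ℝ} (hg0 : g (x 0) = y 0) (hgN : g (x N) = y N) {i : ℕ} (hi : i < N) :
    T g (x (i + 1)) = α i * y N + q i (x N) := by
  rw [hT g hg0 hgN i hi _ (right_mem_Icc.2 (hx i hi).le),
    LmInv_knot_succ (knot_zero_lt hx (by omega)).ne (hx i hi).ne, hgN]

theorem mapsTo (hT : IsReadBajraktarevicOp x y N α q T) (hx : ∀ i < N, x i < x (i + 1))
    (hN : 0 < N) (hqc : ∀ i < N, ContinuousOn (q i) (Icc (x 0) (x N)))
    (hjoin0 : α 0 * y 0 + q 0 (x 0) = y 0) (hjoinN : α (N - 1) * y N + q (N - 1) (x N) = y N) :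
    MapsTo T (pinnedContinuousOn (x 0) (x N) (y 0) (y N))
      (pinnedContinuousOn (x 0) (x N) (y 0) (y N)) := by
  rintro g ⟨hg, hg0, hgN⟩
  have h0N := knot_zero_lt hx hN
  have hpiece (i : ℕ) (hi : i < N) : ContinuousOn (T g) (Icc (x i) (x (i + 1))) := by
    have hL := mapsTo_LmInv h0N (hx i hi)
    refine ContinuousOn.congr ?_ (hT g hg0 hgN i hi)
    exact continuousOn_const.mul (hg.comp continuous_LmInv.continuousOn hL) |>.add
      ((hqc i hi).comp continuous_LmInv.continuousOn hL)
  refine ⟨continuousOn_Icc_of_continuousOn_pieces hN hpiece,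
    by rw [hT.apply_knot hx hg0 hgN hN, hjoin0], ?_⟩
  obtain ⟨n, rfl⟩ : ∃ n, N = n + 1 := ⟨N - 1, by omega⟩
  rw [hT.apply_knot_succ hx hg0 hgN n.lt_succ_self]
  simpa using hjoinN

theorem abs_sub_le (hT : IsReadBajraktarevicOp x y N α q T) (hx : ∀ i < N, x i < x (i + 1))
    (hN : 0 < N) {A : ℝ} (hαA : ∀ i < N, |α i| ≤ A) {g h : ℝ → ℝ}
    (hg : g ∈ pinnedContinuousOn (x 0) (x N) (y 0) (y N))
    (hh : h ∈ pinnedContinuousOn (x 0) (x N) (y 0) (y N)) {M : ℝ}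
    (hM : ∀ u ∈ Icc (x 0) (x N), |g u - h u| ≤ M) {t : ℝ} (ht : t ∈ Icc (x 0) (x N)) :
    |T g t - T h t| ≤ A * M := by
  obtain ⟨i, hi, hti⟩ := exists_mem_Icc_knots hN ht
  have hu := mapsTo_LmInv (knot_zero_lt hx (by omega)) (hx i hi) hti
  rw [hT g hg.2.1 hg.2.2 i hi t hti, hT h hh.2.1 hh.2.2 i hi t hti, add_sub_add_right_eq_sub,
    ← mul_sub, abs_mul]
  exact mul_le_mul (hαA i hi) (hM _ hu) (abs_nonneg _) ((abs_nonneg _).trans (hαA i hi))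

theorem abs_knot_sub_le_of_eqOn (hT : IsReadBajraktarevicOp x y N α q T)
    (hx : ∀ i < N, x i < x (i + 1)) {ε : ℝ} (hε : 0 ≤ ε) {ytil : ℕ → ℝ}
    (hytil : ∀ i, 1 ≤ i → i < N → ytil i ∈ Icc (y i - ε) (y i + ε))
    (hjoin : ∀ i, i + 1 < N → α i * y N + q i (x N) = ytil (i + 1)) {f : ℝ → ℝ}
    (hf : f ∈ pinnedContinuousOn (x 0) (x N) (y 0) (y N))
    (hfix : EqOn (T f) f (Icc (x 0) (x N))) {j : ℕ} (hj : j ≤ N) :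
    |f (x j) - y j| ≤ ε := by
  rcases Nat.eq_zero_or_pos j with rfl | hj0
  · simpa [hf.2.1] using hε
  rcases hj.eq_or_lt with rfl | hjN
  · simpa [hf.2.2] using hε
  obtain ⟨i, rfl⟩ : ∃ i, j = i + 1 := ⟨j - 1, by omega⟩
  have hfj : f (x (i + 1)) = ytil (i + 1) := by
    rw [← hfix (knot_mem_Icc hx hj), hT.apply_knot_succ hx hf.2.1 hf.2.2 (by omega), hjoin i hjN]
  rw [hfj, abs_sub_le_iff]
  obtain ⟨h₁, h₂⟩ := hytil (i + 1) hj0 hjN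
  constructor <;> linarith

end IsReadBajraktarevicOp

end ReadBajraktarevic

/-- With the ε-perturbed join-up conditions, the RB operator on `C_{y0,yN}(I)` is well-defined,
is a contraction with factor `max |α i| < 1`, and its unique fixed point `f` is continuous and
satisfies `|f (x i) - y i| ≤ ε` at every knot. -/
theorem stmt4
    (N : ℕ) (hN : 2 ≤ N)
    (x y : ℕ → ℝ)
    (hx : ∀ i, i < N → x i < x (i + 1))
    (α : ℕ → ℝ) (hα : ∀ i, i < N → |α i| < 1)
    (q : ℕ → ℝ → ℝ)
    (hqc : ∀ i, i < N → ContinuousOn (q i) (Icc (x 0) (x N)))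
    (ε : ℝ) (hε : 0 < ε)
    (ytil : ℕ → ℝ)
    (hytil : ∀ i, 1 ≤ i → i < N → ytil i ∈ Icc (y i - ε) (y i + ε))
    (hjoin0 : α 0 * y 0 + q 0 (x 0) = y 0)
    (hjoinN : α (N - 1) * y N + q (N - 1) (x N) = y N)
    (hjoin : ∀ i, i + 1 < N →
      α i * y N + q i (x N) = ytil (i + 1) ∧ α (i + 1) * y 0 + q (i + 1) (x 0) = ytil (i + 1))
    (T : (ℝ → ℝ) → ℝ → ℝ)
    (hT : ∀ g : ℝ → ℝ, g (x 0) = y 0 → g (x N) = y N → ∀ i, i < N →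
      ∀ t ∈ Icc (x i) (x (i + 1)),
        T g t = α i * g (LmInv x N i t) + q i (LmInv x N i t)) :
    (∀ g : ℝ → ℝ, ContinuousOn g (Icc (x 0) (x N)) → g (x 0) = y 0 → g (x N) = y N →
      ContinuousOn (T g) (Icc (x 0) (x N)) ∧ T g (x 0) = y 0 ∧ T g (x N) = y N) ∧
    (Finset.range N).sup' (Finset.nonempty_range_iff.mpr (by omega)) (fun i => |α i|) < 1 ∧
    (∀ g h : ℝ → ℝ,
      ContinuousOn g (Icc (x 0) (x N)) → g (x 0) = y 0 → g (x N) = y N →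
      ContinuousOn h (Icc (x 0) (x N)) → h (x 0) = y 0 → h (x N) = y N →
      (⨆ t : Icc (x 0) (x N), |T g (t : ℝ) - T h (t : ℝ)|) ≤
        (Finset.range N).sup' (Finset.nonempty_range_iff.mpr (by omega)) (fun i => |α i|) *
          ⨆ t : Icc (x 0) (x N), |g (t : ℝ) - h (t : ℝ)|) ∧
    (∃ f : ℝ → ℝ, ContinuousOn f (Icc (x 0) (x N)) ∧ f (x 0) = y 0 ∧ f (x N) = y N ∧
      (∀ t ∈ Icc (x 0) (x N), T f t = f t) ∧
      (∀ j, j ≤ N → |f (x j) - y j| ≤ ε) ∧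
      (∀ g : ℝ → ℝ, ContinuousOn g (Icc (x 0) (x N)) → g (x 0) = y 0 → g (x N) = y N →
        (∀ t ∈ Icc (x 0) (x N), T g t = g t) →
        ∀ t ∈ Icc (x 0) (x N), g t = f t)) := by
  have hRB : IsReadBajraktarevicOp x y N α q T := hT
  have hN0 : 0 < N := by omega
  have h0N : x 0 < x N := knot_zero_lt hx hN0
  set A := (Finset.range N).sup' (Finset.nonempty_range_iff.mpr (by omega)) (fun i => |α i|)
  have hαA : ∀ i < N, |α i| ≤ A := fun i hi =>
    Finset.le_sup' (fun i => |α i|) (Finset.mem_range.2 hi)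
  have hA : A < 1 := Finset.sup'_lt_iff _ |>.2 fun i hi => hα i (Finset.mem_range.1 hi)
  have hmaps := hRB.mapsTo hx hN0 hqc hjoin0 hjoinN
  have hlip {g h : ℝ → ℝ} (hg : g ∈ pinnedContinuousOn (x 0) (x N) (y 0) (y N))
      (hh : h ∈ pinnedContinuousOn (x 0) (x N) (y 0) (y N)) (M : ℝ)
      (hM : ∀ u ∈ Icc (x 0) (x N), |g u - h u| ≤ M) (t : ℝ) (ht : t ∈ Icc (x 0) (x N)) :=
    hRB.abs_sub_le hx hN0 hαA hg hh hM ht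
  obtain ⟨f, hf, hfix, hunique⟩ :=
    exists_fixedPoint_of_abs_sub_le h0N.le hA (pinnedContinuousOn_nonempty h0N) hmaps
      fun g hg h hh => hlip hg hh
  refine ⟨fun g hg hg0 hgN => hmaps ⟨hg, hg0, hgN⟩, hA,
    fun g h hg hg0 hgN hh hh0 hhN =>
      iSup_abs_sub_le_mul_iSup h0N.le hg hh (hlip ⟨hg, hg0, hgN⟩ ⟨hh, hh0, hhN⟩),
    f, hf.1, hf.2.1, hf.2.2, hfix, fun j hj => ?_,
    fun g hg hg0 hgN hgT => hunique g ⟨hg, hg0, hgN⟩ hgT⟩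
  exact hRB.abs_knot_sub_le_of_eqOn hx hε.le hytil (fun i hi => (hjoin i hi).1) hf hfix hj
end

section
/- Assume each q_i is Lipschitz continuous. Then the set of points of I at which the bounded fractal function f is discontinuous has Lebesgue measure zero; in particular f is Riemann integrable on I. -/
open Set

/-- The affine map `L i t = a i * t + b i`. -/
noncomputable def Lm (x : ℕ → ℝ) (N i : ℕ) (t : ℝ) : ℝ := aC x N i * t + bC x N i

/-!
Let `G` be the countable set of points reachable from the nodes `x j` by finitely many
applications of the maps `L i`. A point `t ∈ (x₀, x_N) \ G` lies in the interior of some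
`L i (I)`, so `t = L i s` with `s ∈ (x₀, x_N) \ G`, and by the functional equation `f` deviates
from `f t` near `t` by at most `|α i|` times its deviation from `f s` near `s`; the continuous
`q i` adds nothing. Starting from the bound `2M` given by `|f| ≤ M`, induction bounds the
deviation at every such `t` by `2M ρ^k` for all `k`, where `ρ = maxᵢ |α i| < 1`. Hence `f` is
continuous off the null set `G`, and a bounded function continuous off a null set is integrable.
-/

open Filter Topology MeasureTheory

def ContinuousAtUpTo {X E : Type*} [TopologicalSpace X] [PseudoMetricSpace E] (f : X → E) (c : ℝ)
    (x : X) : Prop :=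
  ∀ ε > c, ∀ᶠ y in 𝓝 x, dist (f y) (f x) < ε

namespace ContinuousAtUpTo

variable {X Y E : Type*} [TopologicalSpace X] [TopologicalSpace Y]

section Metric

variable [PseudoMetricSpace E] {f g : X → E} {c c' : ℝ} {x : X}

theorem nonneg (hf : ContinuousAtUpTo f c x) : 0 ≤ c := by
  by_contra! hc
  have hx := (hf (c / 2) (by linarith)).self_of_nhds
  rw [dist_self] at hx
  linarith

theorem mono (hf : ContinuousAtUpTo f c x) (hcc' : c ≤ c') : ContinuousAtUpTo f c' x :=
  fun ε hε => hf ε (hcc'.trans_lt hε)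

theorem congr (hf : ContinuousAtUpTo f c x) (hfg : f =ᶠ[𝓝 x] g) : ContinuousAtUpTo g c x := by
  intro ε hε
  filter_upwards [hf ε hε, hfg] with y hy hfgy
  rwa [← hfgy, ← hfg.eq_of_nhds]

theorem of_comp_homeomorph (e : X ≃ₜ Y) {f : Y → E} (hf : ContinuousAtUpTo (f ∘ e) c x) :
    ContinuousAtUpTo f c (e x) := by
  intro ε hε
  rw [← e.map_nhds_eq, eventually_map]
  exact hf ε hε

theorem continuousAt {c : ℕ → ℝ} (hf : ∀ n, ContinuousAtUpTo f (c n) x)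
    (hc : Tendsto c atTop (𝓝 0)) : ContinuousAt f x :=
  Metric.tendsto_nhds.2 fun ε hε =>
    let ⟨n, hn⟩ := (hc.eventually (gt_mem_nhds hε)).exists
    hf n ε hn

end Metric

section Normed

variable [SeminormedAddCommGroup E] {f q : X → E} {c M : ℝ} {x : X}

theorem of_norm_le (hf : ∀ᶠ y in 𝓝 x, ‖f y‖ ≤ M) : ContinuousAtUpTo f (2 * M) x := by
  intro ε hε
  filter_upwards [hf] with y hy
  calc dist (f y) (f x) ≤ ‖f y‖ + ‖f x‖ := dist_le_norm_add_norm _ _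
    _ ≤ 2 * M := by linarith [hf.self_of_nhds]
    _ < ε := hε

theorem add_continuousAt (hf : ContinuousAtUpTo f c x) (hq : ContinuousAt q x) :
    ContinuousAtUpTo (fun y => f y + q y) c x := by
  intro ε hε
  have hδ : 0 < (ε - c) / 2 := by linarith
  filter_upwards [hf (c + (ε - c) / 2) (by linarith), Metric.tendsto_nhds.1 hq _ hδ]
    with y hfy hqy
  calc dist (f y + q y) (f x + q x) ≤ dist (f y) (f x) + dist (q y) (q x) :=
        dist_add_add_le _ _ _ _
    _ < ε := by linarith

theorem const_smul {𝕜 : Type*} [NormedField 𝕜] [NormedSpace 𝕜 E]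
    (hf : ContinuousAtUpTo f c x) (a : 𝕜) : ContinuousAtUpTo (fun y => a • f y) (‖a‖ * c) x := by
  intro ε hε
  rcases eq_or_ne a 0 with rfl | ha
  · simp only [zero_smul, dist_self, norm_zero, zero_mul] at hε ⊢
    exact Eventually.of_forall fun _ => hε
  have ha' : 0 < ‖a‖ := norm_pos_iff.2 ha
  filter_upwards [hf (ε / ‖a‖) ((lt_div_iff₀' ha').2 hε)] with y hy
  rw [dist_smul₀]
  exact (lt_div_iff₀' ha').1 hy

end Normed

end ContinuousAtUpTo

def forwardOrbit {ι α : Type*} (L : ι → α → α) (S : Set α) : Set α :=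
  ⋃ l : List ι, (fun s => l.foldr L s) '' S

section forwardOrbit

variable {ι α : Type*} {L : ι → α → α} {S : Set α}

theorem subset_forwardOrbit : S ⊆ forwardOrbit L S :=
  fun s hs => mem_iUnion.2 ⟨[], s, hs, rfl⟩

theorem mapsTo_forwardOrbit (i : ι) : MapsTo (L i) (forwardOrbit L S) (forwardOrbit L S) := by
  rintro _ ⟨_, ⟨l, rfl⟩, s, hs, rfl⟩
  exact mem_iUnion.2 ⟨i :: l, s, hs, rfl⟩

theorem Set.Countable.forwardOrbit [Countable ι] (hS : S.Countable) :
    (forwardOrbit L S).Countable :=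
  countable_iUnion fun _ => hS.image _

end forwardOrbit

theorem integrableOn_of_continuousOn_diff_null {α E : Type*} [TopologicalSpace α]
    [MeasurableSpace α] [OpensMeasurableSpace α] [NormedAddCommGroup E]
    [SecondCountableTopologyEither α E] {μ : Measure α} {f : α → E} {s B : Set α} {M : ℝ}
    (hs : MeasurableSet s) (hμs : μ s ≠ ⊤) (hB : MeasurableSet B) (hB0 : μ B = 0)
    (hf : ContinuousOn f (s \ B)) (hfM : ∀ t ∈ s, ‖f t‖ ≤ M) : IntegrableOn f s μ := by
  have hμ : μ.restrict s = μ.restrict (s \ B) :=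
    Measure.restrict_congr_set (sdiff_ae_eq_self.2 (measure_mono_null inter_subset_right hB0)).symm
  refine .of_bound hμs.lt_top ?_ M ((ae_restrict_iff' hs).2 (ae_of_all _ hfM))
  rw [hμ]
  exact hf.aestronglyMeasurable (hs.diff hB)

section Partition

variable {N : ℕ} {x : ℕ → ℝ}

theorem exists_mem_Ioo_of_notMem_range {t : ℝ} (ht : t ∈ Ioo (x 0) (x N))
    (htx : t ∉ range x) : ∃ i < N, t ∈ Ioo (x i) (x (i + 1)) := by
  obtain ⟨i, hi, hti⟩ := mem_iUnion₂.1 (Ico_subset_biUnion_Ico N x (Ioo_subset_Ico_self ht))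
  exact ⟨i, Finset.mem_range.1 hi, lt_of_le_of_ne hti.1 fun h => htx ⟨i, h⟩, hti.2⟩

theorem Lm_x_zero (h : x 0 ≠ x N) (i : ℕ) : Lm x N i (x 0) = x i := by
  unfold Lm aC bC
  field_simp [sub_ne_zero.2 h.symm]
  ring

theorem Lm_x_N (h : x 0 ≠ x N) (i : ℕ) : Lm x N i (x N) = x (i + 1) := by
  unfold Lm aC bC
  field_simp [sub_ne_zero.2 h.symm]
  ring

theorem aC_pos (h : x 0 < x N) {i : ℕ} (hi : x i < x (i + 1)) : 0 < aC x N i :=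
  div_pos (sub_pos.2 hi) (sub_pos.2 h)

theorem Lm_image_Ioo (h : x 0 < x N) {i : ℕ} (hi : x i < x (i + 1)) :
    Lm x N i '' Ioo (x 0) (x N) = Ioo (x i) (x (i + 1)) := by
  have := affineHomeomorph_image_Ioo _ (bC x N i) (x 0) (x N) (aC_pos h hi)
  rwa [← Lm_x_zero h.ne i, ← Lm_x_N h.ne i]

end Partition

theorem exists_abs_le_of_abs_lt_one {α : ℕ → ℝ} {N : ℕ} (hα : ∀ i < N, |α i| < 1) :
    ∃ ρ, 0 ≤ ρ ∧ ρ < 1 ∧ ∀ i < N, |α i| ≤ ρ := by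
  refine ⟨((Finset.range N).sup fun i => ‖α i‖₊ : NNReal), NNReal.coe_nonneg _, ?_, fun i hi => ?_⟩
  · refine NNReal.coe_lt_one.2 ((Finset.sup_lt_iff zero_lt_one).2 fun i hi => ?_)
    exact NNReal.coe_lt_one.1 (hα i (Finset.mem_range.1 hi))
  · exact Finset.le_sup (f := fun i => ‖α i‖₊) (Finset.mem_range.2 hi)

section FractalFunction

variable {N : ℕ} {x α : ℕ → ℝ} {q : ℕ → ℝ → ℝ} {f : ℝ → ℝ}

theorem continuousAtUpTo_Lm (hx0N : x 0 < x N) {i : ℕ} (hi : x i < x (i + 1)) {s c : ℝ}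
    (hs : s ∈ Ioo (x 0) (x N)) (hfe : ∀ t ∈ Ioo (x 0) (x N), f (Lm x N i t) = α i * f t + q i t)
    (hq : ContinuousAt (q i) s) (hf : ContinuousAtUpTo f c s) :
    ContinuousAtUpTo f (|α i| * c) (Lm x N i s) := by
  let e := affineHomeomorph (aC x N i) (bC x N i) (aC_pos hx0N hi).ne'
  have hfe' : (fun t => α i • f t + q i t) =ᶠ[𝓝 s] f ∘ e :=
    eventually_of_mem (Ioo_mem_nhds hs.1 hs.2) fun t ht => (hfe t ht).symm
  exact ((hf.const_smul (α i)).add_continuousAt hq).congr hfe' |>.of_comp_homeomorph e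

theorem continuousAtUpTo_pow_of_notMem_forwardOrbit (hx : ∀ i < N, x i < x (i + 1)) {ρ : ℝ}
    (hαρ : ∀ i < N, |α i| ≤ ρ) (hq : ∀ i < N, ContinuousOn (q i) (Ioo (x 0) (x N)))
    (hfe : ∀ i < N, ∀ t ∈ Ioo (x 0) (x N), f (Lm x N i t) = α i * f t + q i t) {M : ℝ}
    (hM : ∀ t ∈ Ioo (x 0) (x N), |f t| ≤ M) (k : ℕ) :
    ∀ t ∈ Ioo (x 0) (x N), t ∉ forwardOrbit (Lm x N) (range x) →
      ContinuousAtUpTo f (2 * M * ρ ^ k) t := by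
  induction k with
  | zero =>
    intro t ht _
    rw [pow_zero, mul_one]
    exact .of_norm_le (eventually_of_mem (Ioo_mem_nhds ht.1 ht.2) hM)
  | succ k ih =>
    intro t ht htG
    obtain ⟨i, hi, hti⟩ := exists_mem_Ioo_of_notMem_range ht fun h => htG (subset_forwardOrbit h)
    have hx0N : x 0 < x N := ht.1.trans ht.2
    rw [← Lm_image_Ioo hx0N (hx i hi)] at hti
    obtain ⟨s, hs, rfl⟩ := hti
    have hfs := ih s hs fun h => htG (mapsTo_forwardOrbit i h)
    refine (continuousAtUpTo_Lm hx0N (hx i hi) hs (hfe i hi)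
      ((hq i hi).continuousAt (Ioo_mem_nhds hs.1 hs.2)) hfs).mono ?_
    calc |α i| * (2 * M * ρ ^ k) ≤ ρ * (2 * M * ρ ^ k) :=
          mul_le_mul_of_nonneg_right (hαρ i hi) hfs.nonneg
      _ = 2 * M * ρ ^ (k + 1) := by ring

end FractalFunction

theorem stmt11_general
    (N : ℕ)
    (x : ℕ → ℝ)
    (hx : ∀ i, i < N → x i < x (i + 1))
    (α : ℕ → ℝ) (hα : ∀ i, i < N → |α i| < 1)
    (q : ℕ → ℝ → ℝ)
    (hq : ∀ i, i < N → ∃ C, ∀ u ∈ Icc (x 0) (x N), ∀ v ∈ Icc (x 0) (x N),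
      |q i u - q i v| ≤ C * |u - v|)
    (f : ℝ → ℝ)
    (hfb : ∃ M, ∀ t ∈ Icc (x 0) (x N), |f t| ≤ M)
    (hfe : ∀ i, i < N → ∀ t ∈ Ico (x 0) (x N), f (Lm x N i t) = α i * f t + q i t) :
    MeasureTheory.volume
        {t : ℝ | t ∈ Icc (x 0) (x N) ∧ ¬ ContinuousWithinAt f (Icc (x 0) (x N)) t} = 0 ∧
    IntervalIntegrable f MeasureTheory.volume (x 0) (x N) := by
  obtain ⟨M, hM⟩ := hfb
  obtain ⟨ρ, hρ0, hρ1, hαρ⟩ := exists_abs_le_of_abs_lt_one hα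
  have hqc : ∀ i < N, ContinuousOn (q i) (Ioo (x 0) (x N)) := fun i hi =>
    let ⟨_, hC⟩ := hq i hi
    (LipschitzOnWith.of_dist_le' hC).continuousOn.mono Ioo_subset_Icc_self
  set G := forwardOrbit (Lm x N) (range x)
  have hG : G.Countable := (countable_range x).forwardOrbit
  have hcont : ∀ t ∈ Icc (x 0) (x N), t ∉ G → ContinuousAt f t := by
    intro t ht htG
    have hxG : ∀ i, t ≠ x i := fun i h => htG (subset_forwardOrbit ⟨i, h.symm⟩)
    have ht' : t ∈ Ioo (x 0) (x N) := ⟨ht.1.lt_of_ne (hxG 0).symm, ht.2.lt_of_ne (hxG N)⟩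
    refine ContinuousAtUpTo.continuousAt (fun k => continuousAtUpTo_pow_of_notMem_forwardOrbit hx
      hαρ hqc (fun i hi t ht => hfe i hi t (Ioo_subset_Ico_self ht))
      (fun t ht => hM t (Ioo_subset_Icc_self ht)) k t ht' htG) ?_
    simpa using (tendsto_pow_atTop_nhds_zero_of_lt_one hρ0 hρ1).const_mul (2 * M)
  refine ⟨measure_mono_null (fun t ⟨ht, hft⟩ => by_contra fun htG =>
    hft (hcont t ht htG).continuousWithinAt) (hG.measure_zero _), ?_⟩
  have hx0N : x 0 ≤ x N :=
    (strictMonoOn_Iic_of_lt_succ hx).monotoneOn (by simp) (by simp) (Nat.zero_le N)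
  refine IntegrableOn.intervalIntegrable ?_
  rw [uIcc_of_le hx0N]
  exact integrableOn_of_continuousOn_diff_null measurableSet_Icc measure_Icc_lt_top.ne
    hG.measurableSet (hG.measure_zero _) (fun t ht => (hcont t ht.1 ht.2).continuousWithinAt) hM

/-- The set of points of discontinuity of the bounded fractal function has Lebesgue measure
zero; in particular `f` is (Riemann, hence interval) integrable on `I`. -/
theorem stmt11
    (N : ℕ) (hN : 2 ≤ N)
    (x : ℕ → ℝ)
    (hx : ∀ i, i < N → x i < x (i + 1))
    (α : ℕ → ℝ) (hα : ∀ i, i < N → |α i| < 1)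
    (q : ℕ → ℝ → ℝ)
    (hq : ∀ i, i < N → ∃ C, ∀ u ∈ Icc (x 0) (x N), ∀ v ∈ Icc (x 0) (x N),
      |q i u - q i v| ≤ C * |u - v|)
    (f : ℝ → ℝ)
    (hfb : ∃ M, ∀ t ∈ Icc (x 0) (x N), |f t| ≤ M)
    (hfe : ∀ i, i < N → ∀ t ∈ Ico (x 0) (x N), f (Lm x N i t) = α i * f t + q i t)
    (hfeN : f (Lm x N (N - 1) (x N)) = α (N - 1) * f (x N) + q (N - 1) (x N)) :
    MeasureTheory.volume
        {t : ℝ | t ∈ Icc (x 0) (x N) ∧ ¬ ContinuousWithinAt f (Icc (x 0) (x N)) t} = 0 ∧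
    IntervalIntegrable f MeasureTheory.volume (x 0) (x N) :=
  stmt11_general N x hx α hα q hq f hfb hfe
end
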